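/- arXiv:1212.1977 — 4 statements merged into one kernel-verified Lean document; each statement's English description precedes it below -/
import Mathlib

section
/- The Petersen graph admits a consecutive radio labeling, i.e., a bijection f from its 10 vertices to {1,...,10} such that |f(u)−f(v)| ≥ 3 − d(u,v) for all distinct vertices u,v. -/
/-!
On a connected graph, an injective labeling already separates non-adjacent vertices (at
distance `≥ 2`) by `≥ 1`, so the radio condition `|f u - f v| ≥ 3 - d(u,v)` only asks that
adjacent vertices get labels at least `2` apart. For the Petersen graph, list the ten pairs so
that consecutive pairs intersect: disjoint (adjacent) pairs are then never neighbours in the list.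
-/

/-- The Petersen graph, realized as the Kneser graph K(5,2): vertices are the
2-element subsets of a 5-element set, adjacent iff disjoint. -/
def petersenGraph : SimpleGraph {s : Finset (Fin 5) // s.card = 2} where
  Adj a b := Disjoint a.1 b.1
  symm := ⟨fun a b h => h.symm⟩
  loopless := by
    constructor
    rintro ⟨s, hs⟩ h
    simp only [disjoint_self] at h
    simp [h] at hs

namespace SimpleGraph

theorem Connected.three_sub_dist_le_abs_sub {V : Type*} {G : SimpleGraph V} (hG : G.Connected)
    {f : V → ℤ} (hf : Function.Injective f) (hadj : ∀ u v, G.Adj u v → 2 ≤ |f u - f v|)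
    {u v : V} (huv : u ≠ v) : 3 - (G.dist u v : ℤ) ≤ |f u - f v| := by
  by_cases h : G.Adj u v
  · rw [dist_eq_one_iff_adj.2 h, Nat.cast_one]
    linarith [hadj u v h]
  · have hdist : (1 : ℤ) < G.dist u v := by
      exact_mod_cast hG.one_lt_dist_of_ne_of_not_adj huv h
    have hlabel : 0 < |f u - f v| := abs_pos.2 (sub_ne_zero.2 (hf.ne huv))
    linarith

end SimpleGraph

instance : DecidableRel petersenGraph.Adj := fun a b =>
  inferInstanceAs (Decidable (Disjoint a.1 b.1))

theorem petersenGraph_exists_common_adj :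
    ∀ u v, u ≠ v → ¬ petersenGraph.Adj u v →
      ∃ w, petersenGraph.Adj u w ∧ petersenGraph.Adj w v := by
  decide

theorem petersenGraph_connected : petersenGraph.Connected := by
  refine (SimpleGraph.connected_iff_exists_forall_reachable _).2
    ⟨⟨{0, 1}, rfl⟩, fun v => ?_⟩
  by_cases huv : ⟨{0, 1}, rfl⟩ = v
  · exact huv ▸ SimpleGraph.Reachable.refl _
  by_cases h : petersenGraph.Adj ⟨{0, 1}, rfl⟩ v
  · exact h.reachable
  obtain ⟨w, huw, hwv⟩ := petersenGraph_exists_common_adj _ v huv h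
  exact huw.reachable.trans hwv.reachable

def petersenOrder : List (Finset (Fin 5)) :=
  [{0,1}, {0,2}, {0,3}, {0,4}, {1,4}, {1,3}, {1,2}, {2,3}, {2,4}, {3,4}]

theorem mem_petersenOrder : ∀ s : {s : Finset (Fin 5) // s.card = 2}, s.1 ∈ petersenOrder := by
  decide

def petersenIndex (s : {s : Finset (Fin 5) // s.card = 2}) : Fin 10 :=
  ⟨petersenOrder.idxOf s.1, List.idxOf_lt_length_iff.2 (mem_petersenOrder s)⟩

theorem petersenIndex_bijective : Function.Bijective petersenIndex := by
  decide

theorem petersenIndex_adj_gap :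
    ∀ u v, petersenGraph.Adj u v →
      2 ≤ |((petersenIndex u : ℕ) : ℤ) - (petersenIndex v : ℕ)| := by
  decide

theorem petersen_consecutive_radio_labeling :
    ∃ f : {s : Finset (Fin 5) // s.card = 2} ≃ Fin 10,
      ∀ u v, u ≠ v →
        (3 : ℤ) - petersenGraph.dist u v ≤
          |(((f u : ℕ) + 1 : ℕ) : ℤ) - (((f v : ℕ) + 1 : ℕ) : ℤ)| := by
  refine ⟨Equiv.ofBijective petersenIndex petersenIndex_bijective, fun u v huv => ?_⟩
  refine petersenGraph_connected.three_sub_dist_le_abs_sub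
    (f := fun w => ((petersenIndex w : ℕ) + 1 : ℕ)) ?_ (fun x y hxy => ?_) huv
  · exact Nat.cast_injective.comp <| Nat.succ_injective.comp <|
      Fin.val_injective.comp petersenIndex_bijective.injective
  · simpa using petersenIndex_adj_gap x y hxy
end

section
/- For integers n ≥ 3 and 1 ≤ t ≤ n, the recursively defined sequence x_1,...,x_{n^t} of t-tuples over {v_1,...,v_n} — given by x^1_i = v_i and x^t_{mn+k} = (x^{t−1}_{⌊m/n⌋n+k}, v_{k+m−⌊m/n⌋ (mod n)}) for k = 1,...,n — is a bijective enumeration of all n^t vertices of K_n^t. -/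
/-!
Write `i - 1 = (p * n + s) * n + r` with `r, s < n`. The recursion sends `i` to the tuple whose
initial part is `x^{t-1}` at the index `p * n + r + 1 ≤ n ^ (t - 1)` and whose last coordinate is
`r + (p * n + s) - p ≡ r + s - p (mod n)`. By induction on `t` the initial part determines `p` and
`r`, and then the last coordinate determines `s` (for `t = 1`, `p = s = 0` and the last coordinate
is `r`); so `x^t` is injective on `[1, n ^ t]`, and it is bijective onto the `n ^ t` tuples by
counting.
-/

/-- The recursively defined ordering of the vertices of `K_n^t`
(vertices are `t`-tuples over `Fin n`, where `k : Fin n` represents `v_(k+1)`;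
indices `i` run over `1,…,n^t`).  It is given by `x^1_i = v_i` and
`x^t_{mn+k} = (x^{t-1}_{⌊m/n⌋·n+k}, v_{k+m-⌊m/n⌋ (mod n)})` for `k = 1,…,n`.
Here `i = m*n + k` with `k ∈ {1,…,n}`, so `m = (i-1)/n` and `k = (i-1) % n + 1`. -/
def xseq (n : ℕ) [NeZero n] : (t : ℕ) → ℕ → (Fin t → Fin n)
  | 0, _ => fun i => i.elim0
  | (t + 1), i =>
      Fin.snoc (xseq n t (((i - 1) / n / n) * n + (i - 1) % n + 1))
        (Fin.ofNat n ((i - 1) % n + ((i - 1) / n - (i - 1) / n / n) : ℕ) : Fin n)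

namespace Nat

theorem eq_of_div_div_mul_add_mod_eq {n a b : ℕ}
    (hinner : a / n / n * n + a % n = b / n / n * n + b % n)
    (hlast : a % n + (a / n - a / n / n) ≡ b % n + (b / n - b / n / n) [MOD n]) : a = b := by
  rcases n.eq_zero_or_pos with rfl | hn
  · simpa using hinner
  have hr : a % n = b % n := by
    simpa [Nat.mul_add_mod_self_right] using congrArg (· % n) hinner
  have hp : a / n / n = b / n / n := by
    simpa [Nat.add_comm, Nat.add_mul_div_right _ _ hn, Nat.div_eq_of_lt (Nat.mod_lt _ hn)]
      using congrArg (· / n) hinner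
  have hs : a / n % n = b / n % n := by
    have h := (Nat.ModEq.add_left_cancel' _ (hr ▸ hlast)).add_right (b / n / n)
    rwa [← hp, Nat.sub_add_cancel (Nat.div_le_self _ _), hp,
      Nat.sub_add_cancel (Nat.div_le_self _ _)] at h
  rw [← Nat.div_add_mod a n, ← Nat.div_add_mod b n, ← Nat.div_add_mod (a / n) n,
    ← Nat.div_add_mod (b / n) n, hp, hs, hr]

theorem div_div_mul_add_mod_lt_pow {n a t : ℕ} (ha : a < n ^ (t + 2)) :
    a / n / n * n + a % n < n ^ (t + 1) := by
  have hn : 0 < n := Nat.pos_of_ne_zero (by rintro rfl; simp at ha)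
  have hp : a / n / n < n ^ t := by
    rw [Nat.div_lt_iff_lt_mul hn, Nat.div_lt_iff_lt_mul hn]
    simpa [pow_succ] using ha
  calc a / n / n * n + a % n < (a / n / n + 1) * n := by nlinarith [Nat.mod_lt a hn]
    _ ≤ n ^ t * n := Nat.mul_le_mul_right _ hp
    _ = n ^ (t + 1) := (pow_succ _ _).symm

end Nat

variable {n : ℕ} [NeZero n]

theorem xseq_succ_add_one (t j : ℕ) :
    xseq n (t + 1) (j + 1) =
      Fin.snoc (xseq n t (j / n / n * n + j % n + 1)) (Fin.ofNat n (j % n + (j / n - j / n / n))) :=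
  rfl

theorem xseq_add_one_injOn (t : ℕ) : Set.InjOn (fun j => xseq n t (j + 1)) (Set.Iio (n ^ t)) := by
  induction t with
  | zero => intro j1 h1 j2 h2 _; simp_all
  | succ t ih =>
    intro j1 h1 j2 h2 heq
    simp only [xseq_succ_add_one, Fin.snoc_injective2.eq_iff] at heq
    obtain ⟨hinit, hlast⟩ := heq
    have hlast : j1 % n + (j1 / n - j1 / n / n) ≡ j2 % n + (j2 / n - j2 / n / n) [MOD n] :=
      congrArg Fin.val hlast
    cases t with
    | zero =>
      rw [pow_one, Set.mem_Iio] at h1 h2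
      simpa [Nat.ModEq, Nat.div_eq_of_lt, Nat.mod_eq_of_lt, h1, h2] using hlast
    | succ t =>
      refine Nat.eq_of_div_div_mul_add_mod_eq (ih ?_ ?_ hinit) hlast
      · exact Nat.div_div_mul_add_mod_lt_pow h1
      · exact Nat.div_div_mul_add_mod_lt_pow h2

theorem xseq_injOn (t : ℕ) : Set.InjOn (xseq n t) (Set.Icc 1 (n ^ t)) := by
  intro i1 h1 i2 h2 heq
  obtain ⟨j1, rfl⟩ := Nat.exists_eq_add_of_le' h1.1
  obtain ⟨j2, rfl⟩ := Nat.exists_eq_add_of_le' h2.1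
  exact congrArg (· + 1) (xseq_add_one_injOn t h1.2 h2.2 heq)

theorem xseq_bijOn_general {n t : ℕ} [NeZero n] :
    Set.BijOn (xseq n t) (Set.Icc 1 (n ^ t)) Set.univ := by
  have hinj := xseq_injOn (n := n) t
  refine ⟨Set.mapsTo_univ _ _, hinj, ?_⟩
  rw [← Finset.coe_Icc] at hinj ⊢
  rw [← Finset.coe_univ]
  exact Finset.surjOn_of_injOn_of_card_le _ (by simp) hinj (by simp)

theorem xseq_bijOn {n t : ℕ} [NeZero n] (hn : 3 ≤ n) (ht1 : 1 ≤ t) (htn : t ≤ n) :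
    Set.BijOn (xseq n t) (Set.Icc 1 (n ^ t)) Set.univ :=
  xseq_bijOn_general
end

section
/- For integers n ≥ 3 and 1 ≤ t ≤ n, the graph K_n^t has a consecutive radio labeling; equivalently, rn(K_n^t) = n^t. -/
/-!
Give label `m < n ^ t` to the vertex whose coordinate `0` is the base-`n` digit `d 0` of `m`
and whose coordinate `k ≠ 0` is `d 0 + d k - d (k + 1) (mod n)`; this is a bijection, and
distance in `K_n^t` is Hamming distance. Adding `0 < s < n` to `m` shifts coordinate `0` by `s`
and coordinate `k ≠ 0` by `s + c k - c (k + 1)`, where `c k ∈ {0, 1}` is the carry into digit `k`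
and is antitone in `k`. So at most one coordinate is unchanged, and only if `s = n - 1`: labels
differing by `s < t ≤ n` are at distance `≥ t - 1 ≥ t + 1 - s` when `s ≥ 2` and at distance `t`
when `s = 1` (as `n ≥ 3`). Conversely the diameter is `t`, so radio labelings are injective and
their span is at least `n ^ t`.
-/

/-- The `t`-fold Cartesian product power of a graph `G`. -/
def SimpleGraph.cartPow {V : Type*} (G : SimpleGraph V) (t : ℕ) :
    SimpleGraph (Fin t → V) where
  Adj x y := ∃ a, G.Adj (x a) (y a) ∧ ∀ k, k ≠ a → x k = y k
  symm := by
    constructor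
    rintro x y ⟨a, h, hk⟩
    exact ⟨a, h.symm, fun k hk' => (hk k hk').symm⟩
  loopless := by
    constructor
    rintro x ⟨a, h, -⟩
    exact G.ne_of_adj h rfl

open Function Finset SimpleGraph

namespace SimpleGraph

section Hamming

variable {V : Type*} [DecidableEq V] {t : ℕ}

theorem hammingDist_le_one_of_cartPow_adj {G : SimpleGraph V} {x y : Fin t → V}
    (h : (G.cartPow t).Adj x y) : hammingDist x y ≤ 1 := by
  obtain ⟨a, -, hxy⟩ := h
  refine card_le_one.mpr fun k hk k' hk' => ?_
  simp only [mem_filter, mem_univ, true_and] at hk hk'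
  by_contra hne
  by_cases hka : k = a
  · exact hk' (hxy k' (hka ▸ Ne.symm hne))
  · exact hk (hxy k hka)

theorem hammingDist_le_length_cartPow {G : SimpleGraph V} {x y : Fin t → V}
    (w : (G.cartPow t).Walk x y) : hammingDist x y ≤ w.length := by
  induction w with
  | nil => simp
  | cons h w ih =>
    rw [Walk.length_cons]
    exact (hammingDist_triangle _ _ _).trans
      (add_comm w.length 1 ▸ add_le_add (hammingDist_le_one_of_cartPow_adj h) ih)

theorem hammingDist_update_lt {x y : Fin t → V} {a : Fin t} (ha : x a ≠ y a) :
    hammingDist (update x a (y a)) y < hammingDist x y := by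
  refine card_lt_card ((ssubset_iff_of_subset fun k => ?_).mpr ⟨a, by simp [ha], by simp⟩)
  by_cases hka : k = a
  · simp [hka]
  · simp [update_of_ne hka]

theorem exists_walk_cartPow_top_length_le_hammingDist (x y : Fin t → V) :
    ∃ w : ((⊤ : SimpleGraph V).cartPow t).Walk x y, w.length ≤ hammingDist x y := by
  by_cases hxy : x = y
  · subst hxy
    exact ⟨.nil, by simp⟩
  obtain ⟨a, ha⟩ := Function.ne_iff.mp hxy
  have hadj : ((⊤ : SimpleGraph V).cartPow t).Adj x (update x a (y a)) :=
    ⟨a, by simpa using ha, fun k hk => (update_of_ne hk _ _).symm⟩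
  obtain ⟨w, hw⟩ := exists_walk_cartPow_top_length_le_hammingDist (update x a (y a)) y
  have := hammingDist_update_lt ha
  exact ⟨.cons hadj w, by rw [Walk.length_cons]; omega⟩
termination_by hammingDist x y
decreasing_by exact hammingDist_update_lt ha

theorem cartPow_top_dist_eq_hammingDist (x y : Fin t → V) :
    ((⊤ : SimpleGraph V).cartPow t).dist x y = hammingDist x y := by
  obtain ⟨w, hw⟩ := exists_walk_cartPow_top_length_le_hammingDist x y
  obtain ⟨p, hp⟩ := Reachable.exists_walk_length_eq_dist ⟨w⟩
  exact le_antisymm ((dist_le w).trans hw) (hp ▸ hammingDist_le_length_cartPow p)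

end Hamming

section Radio

variable {V : Type*} (G : SimpleGraph V)

/-- `d` plays the role of the diameter of `G`. -/
def IsRadioLabeling (d : ℕ) (f : V → ℤ) : Prop :=
  ∀ x y, x ≠ y → (d : ℤ) + 1 - G.dist x y ≤ |f x - f y|

noncomputable def radioNumber (d : ℕ) : ℕ :=
  sInf {m | ∃ f : V → ℕ, (∀ x, 1 ≤ f x) ∧ (∀ x, f x ≤ m) ∧ G.IsRadioLabeling d fun x => f x}

variable {G} {d : ℕ} {f : V → ℤ}

theorem IsRadioLabeling.add_const (hf : G.IsRadioLabeling d f) (c : ℤ) :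
    G.IsRadioLabeling d fun x => f x + c := fun x y hxy => by
  simpa only [add_sub_add_right_eq_sub] using hf x y hxy

theorem IsRadioLabeling.injective (hf : G.IsRadioLabeling d f) (hd : ∀ x y, G.dist x y ≤ d) :
    Injective f := by
  intro x y hxy
  by_contra hne
  have h := hf x y hne
  rw [hxy, sub_self, abs_zero] at h
  have := hd x y
  omega

theorem isRadioLabeling_of_lt (hf : Injective f)
    (h : ∀ x y, f x < f y → (d : ℤ) + 1 - G.dist x y ≤ f y - f x) :
    G.IsRadioLabeling d f := by
  intro x y hxy
  rcases lt_or_gt_of_ne (hf.ne hxy) with hlt | hlt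
  · rw [abs_sub_comm]
    exact (h x y hlt).trans (le_abs_self _)
  · rw [dist_comm]
    exact (h y x hlt).trans (le_abs_self _)

theorem radioNumber_eq_of_equiv [Fintype V] {N : ℕ} (e : V ≃ Fin N)
    (he : G.IsRadioLabeling d fun x => (e x : ℤ)) (hd : ∀ x y, G.dist x y ≤ d) :
    G.radioNumber d = N := by
  have hN : N ∈ {m | ∃ g : V → ℕ, (∀ x, 1 ≤ g x) ∧ (∀ x, g x ≤ m) ∧
      G.IsRadioLabeling d fun x => g x} :=
    ⟨fun x => e x + 1, fun x => Nat.le_add_left 1 _, fun x => (e x).isLt,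
      by exact_mod_cast he.add_const 1⟩
  refine le_antisymm (Nat.sInf_le hN) (le_csInf ⟨N, hN⟩ ?_)
  rintro m ⟨g, hg1, hgm, hg⟩
  have hinj : Injective g := fun x y hxy => hg.injective hd (by simp [hxy])
  calc N = #(univ : Finset V) := by simp [Fintype.card_congr e]
    _ ≤ #(Icc 1 m) := card_le_card_of_injOn g (fun x _ => by simp [hg1 x, hgm x]) hinj.injOn
    _ = m := by simp

end Radio

end SimpleGraph

namespace CompleteCartPow

variable {n m s k : ℕ}

def carry (n m s k : ℕ) : ℕ := (m + s) / n ^ k - m / n ^ k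

theorem add_div_pow_eq (n m s k : ℕ) : (m + s) / n ^ k = m / n ^ k + carry n m s k := by
  have := Nat.div_le_div_right (c := n ^ k) (Nat.le_add_right m s)
  unfold carry
  omega

theorem carry_le_one (h : s < n ^ k) : carry n m s k ≤ 1 := by
  have := Nat.add_div_le_div_add_div_add_one m s (n ^ k)
  rw [Nat.div_eq_of_lt h] at this
  unfold carry
  omega

theorem carry_eq_zero_of_le {j : ℕ} (h : carry n m s j = 0) (hjk : j ≤ k) :
    carry n m s k = 0 := by
  obtain ⟨i, rfl⟩ := Nat.exists_eq_add_of_le hjk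
  have h' : (m + s) / n ^ j = m / n ^ j := by rw [add_div_pow_eq, h, add_zero]
  simp [carry, pow_add, ← Nat.div_div_eq_div_mul, h']

/-- Mod `n`, `m / n ^ k` is the `k`-th base-`n` digit `d k` of `m`, so coordinate `k ≠ 0` is
`d 0 + d k - d (k + 1)`. -/
def radioCoord (n m k : ℕ) : ZMod n :=
  if k = 0 then m else m + (m / n ^ k : ℕ) - (m / n ^ (k + 1) : ℕ)

theorem radioCoord_add_sub (hk : k ≠ 0) :
    radioCoord n (m + s) k - radioCoord n m k =
      ((s + carry n m s k : ℕ) : ZMod n) - carry n m s (k + 1) := by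
  simp only [radioCoord, if_neg hk, add_div_pow_eq n m s]
  push_cast
  ring

theorem radioCoord_zero_ne_add (hs0 : 0 < s) (hsn : s < n) :
    radioCoord n m 0 ≠ radioCoord n (m + s) 0 := by
  simpa [radioCoord, ZMod.natCast_eq_zero_iff] using Nat.not_dvd_of_pos_of_lt hs0 hsn

theorem carry_of_radioCoord_eq_add (hs0 : 0 < s) (hsn : s < n) (hk : k ≠ 0)
    (h : radioCoord n m k = radioCoord n (m + s) k) :
    s + 1 = n ∧ carry n m s k = 1 ∧ carry n m s (k + 1) = 0 := by
  have hk1 : carry n m s k ≤ 1 := carry_le_one (hsn.trans_le (Nat.le_self_pow hk n))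
  have hk2 : carry n m s (k + 1) ≤ carry n m s k := by
    by_cases h0 : carry n m s k = 0
    · exact (carry_eq_zero_of_le h0 k.le_succ).trans_le (Nat.zero_le _)
    · have := carry_le_one (m := m) (hsn.trans_le (Nat.le_self_pow (by omega : k + 1 ≠ 0) n))
      omega
  have hdvd : n ∣ s + carry n m s k - carry n m s (k + 1) := by
    rw [← ZMod.natCast_eq_zero_iff, Nat.cast_sub (by omega), ← radioCoord_add_sub hk, h, sub_self]
  have := Nat.le_of_dvd (by omega) hdvd
  omega

theorem card_radioCoord_eq_add_le (hs0 : 0 < s) (hsn : s < n) (t : ℕ) :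
    #{k : Fin t | radioCoord n m k = radioCoord n (m + s) k} ≤ if s + 1 = n then 1 else 0 := by
  have hk0 {k : Fin t} (hk : radioCoord n m k = radioCoord n (m + s) k) : (k : ℕ) ≠ 0 :=
    fun h0 => radioCoord_zero_ne_add hs0 hsn (h0 ▸ hk)
  split_ifs with hs
  · have hle {a b : Fin t} (ha : radioCoord n m a = radioCoord n (m + s) a)
        (hb : radioCoord n m b = radioCoord n (m + s) b) : (a : ℕ) ≤ b := by
      by_contra hba
      have hb0 := (carry_of_radioCoord_eq_add hs0 hsn (hk0 hb) hb).2.2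
      have ha1 := (carry_of_radioCoord_eq_add hs0 hsn (hk0 ha) ha).2.1
      rw [carry_eq_zero_of_le hb0 (by omega)] at ha1
      exact zero_ne_one ha1
    refine card_le_one.mpr fun a ha b hb => ?_
    simp only [mem_filter, mem_univ, true_and] at ha hb
    exact Fin.ext (le_antisymm (hle ha hb) (hle hb ha))
  · refine (card_eq_zero.mpr (filter_eq_empty_iff.mpr fun k _ hk => hs ?_)).le
    exact (carry_of_radioCoord_eq_add hs0 hsn (hk0 hk) hk).1

theorem le_hammingDist_radioCoord_add (hs0 : 0 < s) (hsn : s < n) (t : ℕ) :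
    t ≤ hammingDist (fun k : Fin t => radioCoord n m k) (fun k => radioCoord n (m + s) k) +
      if s + 1 = n then 1 else 0 := by
  have := card_filter_add_card_filter_not (s := univ)
    fun k : Fin t => radioCoord n m k = radioCoord n (m + s) k
  have := card_radioCoord_eq_add_le (m := m) hs0 hsn t
  rw [card_univ, Fintype.card_fin] at *
  simp only [hammingDist, ne_eq] at *
  omega

theorem eq_of_radioCoord_eq {t m m' : ℕ} (hm : m < n ^ t) (hm' : m' < n ^ t)
    (h : ∀ k < t, radioCoord n m k = radioCoord n m' k) : m = m' := by
  rcases t.eq_zero_or_pos with rfl | ht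
  · rw [pow_zero] at hm hm'
    omega
  have h0 : (m : ZMod n) = m' := by simpa [radioCoord] using h 0 ht
  have hq (k : ℕ) (hk : k ≤ t) : ((m / n ^ k : ℕ) : ZMod n) = (m' / n ^ k : ℕ) := by
    induction hk using Nat.decreasingInduction with
    | self => rw [Nat.div_eq_of_lt hm, Nat.div_eq_of_lt hm']
    | of_succ k hkt ih =>
      rcases eq_or_ne k 0 with rfl | hk0
      · simpa using h0
      · have hk := h k hkt
        simp only [radioCoord, if_neg hk0, ih] at hk
        linear_combination hk - h0
  have hdigits : finFunctionFinEquiv.symm ⟨m, hm⟩ = finFunctionFinEquiv.symm ⟨m', hm'⟩ := by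
    funext k
    ext
    simp only [finFunctionFinEquiv_symm_apply_val]
    rw [← ZMod.natCast_eq_natCast_iff']
    exact hq k k.isLt.le
  simpa using finFunctionFinEquiv.symm.injective hdigits

section Vertex

variable {n t : ℕ} [NeZero n]

def radioVertex (n t : ℕ) [NeZero n] (m : ℕ) : Fin t → Fin n :=
  fun k => (ZMod.finEquiv n).symm (radioCoord n m k)

theorem hammingDist_radioVertex (m m' : ℕ) :
    hammingDist (radioVertex n t m) (radioVertex n t m') =
      hammingDist (fun k : Fin t => radioCoord n m k) (fun k => radioCoord n m' k) :=
  hammingDist_comp (fun _ => (ZMod.finEquiv n).symm) fun _ => (ZMod.finEquiv n).symm.injective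

theorem eq_of_radioVertex_eq {m m' : ℕ} (hm : m < n ^ t) (hm' : m' < n ^ t)
    (h : radioVertex n t m = radioVertex n t m') : m = m' :=
  eq_of_radioCoord_eq hm hm' fun k hk => (ZMod.finEquiv n).symm.injective (congrFun h ⟨k, hk⟩)

noncomputable def radioEquiv (n t : ℕ) [NeZero n] : Fin (n ^ t) ≃ (Fin t → Fin n) :=
  Equiv.ofBijective (fun m => radioVertex n t m) <|
    (Fintype.bijective_iff_injective_and_card _).mpr
      ⟨fun a b h => Fin.ext (eq_of_radioVertex_eq a.isLt b.isLt h), by simp⟩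

theorem sub_le_sub_hammingDist_radioVertex (hn : 3 ≤ n) (htn : t ≤ n) {i j : ℕ} (hij : i < j)
    (hj : j < n ^ t) :
    (t : ℤ) + 1 - hammingDist (radioVertex n t i) (radioVertex n t j) ≤ j - i := by
  obtain ⟨s, rfl⟩ : ∃ s, j = i + s := ⟨j - i, by omega⟩
  have hpos : 0 < hammingDist (radioVertex n t i) (radioVertex n t (i + s)) :=
    hammingDist_pos.mpr fun h => hij.ne (eq_of_radioVertex_eq (by omega) hj h)
  rcases lt_or_ge s t with hst | hts
  · have := le_hammingDist_radioCoord_add (m := i) (by omega) (hst.trans_le htn) t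
    rw [← hammingDist_radioVertex] at this
    split_ifs at this <;> omega
  · omega

theorem isRadioLabeling_radioEquiv_symm (hn : 3 ≤ n) (htn : t ≤ n) :
    ((⊤ : SimpleGraph (Fin n)).cartPow t).IsRadioLabeling t
      fun x => ((radioEquiv n t).symm x : ℤ) := by
  refine isRadioLabeling_of_lt
    (fun x y h => (radioEquiv n t).symm.injective (Fin.ext (by exact_mod_cast h))) fun x y h => ?_
  obtain ⟨i, rfl⟩ := (radioEquiv n t).surjective x
  obtain ⟨j, rfl⟩ := (radioEquiv n t).surjective y
  simp only [Equiv.symm_apply_apply, Nat.cast_lt, cartPow_top_dist_eq_hammingDist] at h ⊢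
  exact sub_le_sub_hammingDist_radioVertex hn htn h j.isLt

end Vertex

end CompleteCartPow

theorem cartPow_complete_consecutive_radio_labeling_general {n t : ℕ} (hn : 3 ≤ n)
    (htn : t ≤ n) :
    (∃ f : (Fin t → Fin n) ≃ Fin (n ^ t),
        ∀ x y : Fin t → Fin n, x ≠ y →
          (t : ℤ) + 1 - ((⊤ : SimpleGraph (Fin n)).cartPow t).dist x y ≤
            |(((f x : ℕ) + 1 : ℕ) : ℤ) - (((f y : ℕ) + 1 : ℕ) : ℤ)|) ∧
      sInf {m : ℕ | ∃ f : (Fin t → Fin n) → ℕ, (∀ x, 1 ≤ f x) ∧ (∀ x, f x ≤ m) ∧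
        ∀ x y : Fin t → Fin n, x ≠ y →
          (t : ℤ) + 1 - ((⊤ : SimpleGraph (Fin n)).cartPow t).dist x y ≤
            |(f x : ℤ) - (f y : ℤ)|} = n ^ t := by
  have : NeZero n := ⟨by omega⟩
  have hdist (x y : Fin t → Fin n) : ((⊤ : SimpleGraph (Fin n)).cartPow t).dist x y ≤ t := by
    simpa [cartPow_top_dist_eq_hammingDist] using hammingDist_le_card_fintype (x := x) (y := y)
  have hlabel := CompleteCartPow.isRadioLabeling_radioEquiv_symm hn htn
  exact ⟨⟨(CompleteCartPow.radioEquiv n t).symm,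
    fun x y hxy => by exact_mod_cast hlabel.add_const 1 x y hxy⟩,
    radioNumber_eq_of_equiv _ hlabel hdist⟩

theorem cartPow_complete_consecutive_radio_labeling {n t : ℕ} (hn : 3 ≤ n)
    (ht1 : 1 ≤ t) (htn : t ≤ n) :
    (∃ f : (Fin t → Fin n) ≃ Fin (n ^ t),
        ∀ x y : Fin t → Fin n, x ≠ y →
          (t : ℤ) + 1 - ((⊤ : SimpleGraph (Fin n)).cartPow t).dist x y ≤
            |(((f x : ℕ) + 1 : ℕ) : ℤ) - (((f y : ℕ) + 1 : ℕ) : ℤ)|) ∧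
      sInf {m : ℕ | ∃ f : (Fin t → Fin n) → ℕ, (∀ x, 1 ≤ f x) ∧ (∀ x, f x ≤ m) ∧
        ∀ x y : Fin t → Fin n, x ≠ y →
          (t : ℤ) + 1 - ((⊤ : SimpleGraph (Fin n)).cartPow t).dist x y ≤
            |(f x : ℤ) - (f y : ℤ)|} = n ^ t :=
  cartPow_complete_consecutive_radio_labeling_general hn htn
end

section
/- Let n ≥ 3, 1 ≤ t ≤ n, and let x_1,...,x_{n^t} be the ordering of V(K_n^t) defined via the matrices A^1,...,A^{n^{t-1}}. Then for all i and all 1 ≤ s ≤ t−1, the number e_{i,i+s} of coordinates in which x_i and x_{i+s} agree satisfies e_{i,i+s} ≤ s − 1. In particular, consecutive vertices x_i and x_{i+1} agree in no coordinate. -/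
/-!
Write a `1`-based index as `a + 1` and put `m = a / n`. The recursion says
`x_(a+1) = (x_(p a + 1), a + c a mod n)` with shift `c a = m - m / n` and prefix index
`p a = a - n * c a`. Moving from `a` to `a + d` with `0 < d < n` raises `c` by `0` or `1`.
If `c` is unchanged, the prefix indices are again `d` apart and the last coordinates differ by
`d`. If `c` rises, which needs a carry (so `a % n ≠ 0`), the prefix indices are `n - d` apart in
the other order and the last coordinates differ by `d + 1`. Induction on `t` then shows that
`x_(a+1)` and `x_(a+d+1)` disagree everywhere unless `d = n - 1` and `a % n ≠ 0`, and agree in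
at most one coordinate in that case. For `s ≤ t - 1 ≤ n - 1` and `n ≥ 3` this is at most `s - 1`.
-/

open Finset

def agreements {β : Type*} [DecidableEq β] {t : ℕ} (f g : Fin t → β) : ℕ :=
  #{j | f j = g j}

section Agreements

variable {β : Type*} [DecidableEq β] {t : ℕ}

lemma agreements_comm (f g : Fin t → β) : agreements f g = agreements g f := by
  simp only [agreements, eq_comm]

lemma agreements_eq_zero_iff {f g : Fin t → β} : agreements f g = 0 ↔ ∀ j, f j ≠ g j := by
  simp [agreements, filter_eq_empty_iff]

lemma agreements_snoc (f g : Fin t → β) (u v : β) :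
    agreements (Fin.snoc f u : Fin (t + 1) → β) (Fin.snoc g v) =
      agreements f g + if u = v then 1 else 0 := by
  simp only [agreements, card_filter, Fin.sum_univ_castSucc, Fin.snoc_castSucc, Fin.snoc_last]

end Agreements

lemma Fin.ofNat_add_ne {n : ℕ} [NeZero n] (x : ℕ) {d : ℕ} (hd : 0 < d) (hdn : d < n) :
    Fin.ofNat n (x + d) ≠ Fin.ofNat n x := by
  intro h
  have hmod : x ≡ x + d [MOD n] := (congrArg Fin.val h).symm
  exact Nat.not_dvd_of_pos_of_lt hd hdn (Nat.left_modEq_add_iff.mp hmod)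

lemma Nat.add_one_mod_eq_zero_of_le {a n : ℕ} (hn : 0 < n) (h : n ≤ a % n + 1) :
    (a + 1) % n = 0 := by
  have hdiv := Nat.div_add_mod a n
  have hmod := Nat.mod_lt a hn
  exact Nat.mod_eq_zero_of_dvd ⟨a / n + 1, by rw [mul_add, mul_one]; omega⟩

section XseqStep

variable (n : ℕ)

def xseqPrefix (a : ℕ) : ℕ := a / n / n * n + a % n

def xseqShift (a : ℕ) : ℕ := a / n - a / n / n

lemma xseq_succ [NeZero n] (t a : ℕ) :
    xseq n (t + 1) (a + 1) =
      Fin.snoc (xseq n t (xseqPrefix n a + 1)) (Fin.ofNat n (a + xseqShift n a)) := by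
  simp only [xseq, Nat.add_sub_cancel, xseqPrefix, xseqShift]
  congr 1
  ext
  simp only [Fin.val_ofNat, Nat.mod_add_mod]

lemma xseqPrefix_add_mul_xseqShift (a : ℕ) : xseqPrefix n a + n * xseqShift n a = a := by
  have h₁ := Nat.div_add_mod a n
  have h₂ := Nat.mul_le_mul_left n (Nat.div_le_self (a / n) n)
  rw [xseqPrefix, xseqShift, Nat.mul_sub, mul_comm]
  omega

lemma xseqPrefix_mod (a : ℕ) : xseqPrefix n a % n = a % n := by
  rw [xseqPrefix, Nat.mul_add_mod_self_right, Nat.mod_mod]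

variable {n}

lemma xseqShift_add (a : ℕ) {d : ℕ} (hdn : d < n) :
    xseqShift n (a + d) = xseqShift n a ∨
      xseqShift n (a + d) = xseqShift n a + 1 ∧ n ≤ a % n + d := by
  have hn : 0 < n := by omega
  have hmod := Nat.mod_lt a hn
  have hdiv := Nat.div_add_mod a n
  rcases lt_or_ge (a % n + d) n with hlt | hge
  · left
    have hsame : (a + d) / n = a / n := by
      apply Nat.div_eq_of_lt_le
      · rw [mul_comm]; omega
      · rw [add_mul, one_mul, mul_comm]; omega
    rw [xseqShift, xseqShift, hsame]
  · have hsucc : (a + d) / n = a / n + 1 := by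
      apply Nat.div_eq_of_lt_le
      · rw [add_mul, one_mul, mul_comm]; omega
      · rw [add_mul, add_mul, one_mul, mul_comm]; omega
    simp only [xseqShift, hsucc, Nat.succ_div]
    have := Nat.div_le_self (a / n) n
    split_ifs <;> omega

lemma agreements_xseq_le [NeZero n] (t a : ℕ) {d : ℕ} (hd : 0 < d) (hdn : d < n) :
    agreements (xseq n t (a + 1)) (xseq n t (a + d + 1)) ≤
      if d + 2 ≤ n ∨ a % n = 0 then 0 else 1 := by
  induction t generalizing a d with
  | zero => simp [agreements]
  | succ t ih =>
    rw [xseq_succ, xseq_succ, agreements_snoc]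
    have hsplit := xseqPrefix_add_mul_xseqShift n a
    have hsplit' := xseqPrefix_add_mul_xseqShift n (a + d)
    rcases xseqShift_add a hdn with hsame | ⟨hnext, hcarry⟩
    · have hpre : xseqPrefix n (a + d) = xseqPrefix n a + d := by
        rw [hsame] at hsplit'; omega
      have hlast : Fin.ofNat n (a + xseqShift n a) ≠
          Fin.ofNat n (a + d + xseqShift n (a + d)) := by
        rw [hsame, add_right_comm]; exact (Fin.ofNat_add_ne _ hd hdn).symm
      rw [hpre, if_neg hlast, add_zero, ← xseqPrefix_mod n a]
      exact ih _ hd hdn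
    · have hpre : xseqPrefix n a = xseqPrefix n (a + d) + (n - d) := by
        rw [hnext, mul_add, mul_one] at hsplit'; omega
      have hprefix : agreements (xseq n t (xseqPrefix n a + 1))
          (xseq n t (xseqPrefix n (a + d) + 1)) = 0 := by
        rw [agreements_comm, hpre, ← Nat.le_zero]
        refine (ih _ (by omega) (by omega)).trans_eq (if_pos ?_)
        rw [xseqPrefix_mod]
        rcases Nat.lt_or_ge 1 d with hd1 | hd1
        · left; omega
        · obtain rfl : d = 1 := by omega
          exact Or.inr (Nat.add_one_mod_eq_zero_of_le (by omega) hcarry)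
      rw [hprefix, zero_add]
      by_cases hd2 : d + 2 ≤ n
      · have hlast : Fin.ofNat n (a + xseqShift n a) ≠
            Fin.ofNat n (a + d + xseqShift n (a + d)) := by
          rw [hnext, show a + d + (xseqShift n a + 1) = a + xseqShift n a + (d + 1) by ring]
          exact (Fin.ofNat_add_ne _ (by omega) (by omega)).symm
        rw [if_neg hlast]
        exact Nat.zero_le _
      · have hmod := Nat.mod_lt a (by omega : 0 < n)
        rw [if_neg (show ¬(d + 2 ≤ n ∨ a % n = 0) by omega)]
        split_ifs <;> omega

end XseqStep

theorem xseq_agreements_le_general {n t : ℕ} [NeZero n] (hn : 3 ≤ n)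
    (htn : t ≤ n) :
    (∀ i s : ℕ, 1 ≤ i → 1 ≤ s → s ≤ t - 1 → i + s ≤ n ^ t →
        (Finset.univ.filter fun j => xseq n t i j = xseq n t (i + s) j).card ≤
          s - 1) ∧
      ∀ i : ℕ, 1 ≤ i → i + 1 ≤ n ^ t →
        ∀ j, xseq n t i j ≠ xseq n t (i + 1) j := by
  constructor
  · intro i s hi hs hst _
    obtain ⟨a, rfl⟩ : ∃ a, i = a + 1 := ⟨i - 1, by omega⟩
    rw [add_right_comm]
    refine (agreements_xseq_le t a hs (by omega)).trans ?_
    split_ifs <;> omega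
  · intro i hi _
    obtain ⟨a, rfl⟩ : ∃ a, i = a + 1 := ⟨i - 1, by omega⟩
    have hdisjoint := agreements_xseq_le (n := n) t a one_pos (by omega)
    rw [if_pos (Or.inl hn)] at hdisjoint
    exact agreements_eq_zero_iff.mp (Nat.le_zero.mp hdisjoint)

theorem xseq_agreements_le {n t : ℕ} [NeZero n] (hn : 3 ≤ n) (ht1 : 1 ≤ t)
    (htn : t ≤ n) :
    (∀ i s : ℕ, 1 ≤ i → 1 ≤ s → s ≤ t - 1 → i + s ≤ n ^ t →
        (Finset.univ.filter fun j => xseq n t i j = xseq n t (i + s) j).card ≤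
          s - 1) ∧
      ∀ i : ℕ, 1 ≤ i → i + 1 ≤ n ^ t →
        ∀ j, xseq n t i j ≠ xseq n t (i + 1) j :=
  xseq_agreements_le_general hn htn
end
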